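/- Let C_τ(x) = sign(x)·min{|x|, τ} with τ > 0, let |g| ≤ B < τ, and let H ~ Cauchy(0, γ₀) with 0 < γ₀ ≤ γ. Then E[(C_τ(g + H) − g)²] ≤ 4γτ/π. -/

import Mathlib

open Real MeasureTheory Set

/-- Hard clipping map with threshold `τ`: `C_τ(x) = sign(x)·min{|x|, τ}`. -/
noncomputable def hardClip (τ x : ℝ) : ℝ := Real.sign x * min |x| τ

/-- Density of the Cauchy distribution with location 0 and scale `γ`. -/
noncomputable def cauchyPDF (γ x : ℝ) : ℝ := γ / (π * (γ ^ 2 + x ^ 2))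

lemma hardClip_eq {τ : ℝ} (hτ : 0 ≤ τ) (x : ℝ) :
    hardClip τ x = max (-τ) (min τ x) := by
  unfold hardClip
  rcases lt_trichotomy x 0 with hx | hx | hx
  · rw [Real.sign_of_neg hx, abs_of_neg hx]
    rcases le_total (-x) τ with h | h
    · rw [min_eq_left h, min_eq_right (by linarith), max_eq_right (by linarith)]; ring
    · rw [min_eq_right h, min_eq_right (by linarith), max_eq_left (by linarith)]; ring
  · simp [hx, Real.sign_zero, min_eq_right hτ, max_eq_right (neg_nonpos.mpr hτ)]
  · rw [Real.sign_of_pos hx, abs_of_pos hx, one_mul, min_comm,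
      max_eq_right (le_min (by linarith) (by linarith))]

lemma cauchyPDF_pos {γ : ℝ} (hγ : 0 < γ) (x : ℝ) : 0 < cauchyPDF γ x := by
  unfold cauchyPDF; positivity

lemma cauchyPDF_continuous {γ : ℝ} (hγ : 0 < γ) : Continuous (cauchyPDF γ) := by
  unfold cauchyPDF
  exact continuous_const.div (by continuity) (fun x => by positivity)

lemma cauchyPDF_integrable {γ : ℝ} (hγ : 0 < γ) : Integrable (cauchyPDF γ) := by
  have h : cauchyPDF γ = fun x => (1 / (π * γ)) * ((1 + (x / γ) ^ 2)⁻¹) := by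
    funext x
    unfold cauchyPDF
    rw [div_pow]
    field_simp
  rw [h]
  exact (integrable_inv_one_add_sq.comp_div hγ.ne').const_mul _

lemma min_sq_integrable {γ : ℝ} (a : ℝ) (hγ : 0 < γ) :
    Integrable (fun h => min (h ^ 2) (a ^ 2) * cauchyPDF γ h) := by
  refine ((cauchyPDF_integrable hγ).const_mul (a ^ 2)).mono'
    (((continuous_pow 2).min continuous_const).mul
      (cauchyPDF_continuous hγ)).aestronglyMeasurable (ae_of_all _ fun x => ?_)
  have h1 : 0 < cauchyPDF γ x := cauchyPDF_pos hγ x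
  have h2 : (0:ℝ) ≤ min (x ^ 2) (a ^ 2) := le_min (sq_nonneg _) (sq_nonneg _)
  rw [Real.norm_eq_abs, abs_of_nonneg (by positivity)]
  exact mul_le_mul_of_nonneg_right (min_le_right _ _) h1.le

/-- The one-sided truncated second moment bound. -/
lemma tail_bound {γ a : ℝ} (hγ : 0 < γ) (ha : 0 ≤ a) :
    (∫ h in Ioi (0:ℝ), min (h ^ 2) (a ^ 2) * cauchyPDF γ h) ≤ 2 * γ * a / π := by
  rcases eq_or_lt_of_le ha with rfl | ha'
  · simp only [ne_eq, OfNat.ofNat_ne_zero, not_false_eq_true, zero_pow]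
    have : ∀ h : ℝ, min (h ^ 2) (0:ℝ) * cauchyPDF γ h = 0 := by
      intro h
      rw [min_eq_right (sq_nonneg h), zero_mul]
    simp only [this, integral_zero]
    positivity
  · set f : ℝ → ℝ := fun h => min (h ^ 2) (a ^ 2) * cauchyPDF γ h with hf
    have hfint : Integrable f := min_sq_integrable a hγ
    have hsplit : Ioc (0:ℝ) a ∪ Ioi a = Ioi 0 := Ioc_union_Ioi_eq_Ioi ha
    have hdisj : Disjoint (Ioc (0:ℝ) a) (Ioi a) := Ioc_disjoint_Ioi le_rfl
    have hunion : (∫ h in Ioi (0:ℝ), f h) =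
        (∫ h in Ioc (0:ℝ) a, f h) + ∫ h in Ioi a, f h := by
      rw [← hsplit, setIntegral_union hdisj measurableSet_Ioi
        (hfint.integrableOn) (hfint.integrableOn)]
    have hI1 : (∫ h in Ioc (0:ℝ) a, f h) ≤ γ * a / π := by
      have hle : ∀ x ∈ Ioc (0:ℝ) a, f x ≤ γ / π := by
        intro x hx
        have h1 : f x ≤ x ^ 2 * cauchyPDF γ x :=
          mul_le_mul_of_nonneg_right (min_le_left _ _) (cauchyPDF_pos hγ x).le
        refine h1.trans ?_
        unfold cauchyPDF
        rw [← mul_div_assoc, div_le_div_iff₀ (by positivity) pi_pos]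
        nlinarith [mul_nonneg (mul_nonneg hγ.le pi_pos.le) (sq_nonneg γ)]
      calc (∫ h in Ioc (0:ℝ) a, f h) ≤ ∫ _ in Ioc (0:ℝ) a, γ / π :=
            setIntegral_mono_on hfint.integrableOn
              ((integrableOn_const_iff).mpr (Or.inr measure_Ioc_lt_top))
              measurableSet_Ioc hle
        _ = a * (γ / π) := by
            rw [setIntegral_const, Real.volume_real_Ioc_of_le ha, smul_eq_mul,
              sub_zero]
        _ = γ * a / π := by ring
    have hI2 : (∫ h in Ioi a, f h) ≤ γ * a / π := by
      have hrint : IntegrableOn (fun x : ℝ => a ^ 2 * (γ / π) * x ^ (-2:ℝ)) (Ioi a) :=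
        (integrableOn_Ioi_rpow_of_lt (by norm_num) ha').const_mul _
      have hle : ∀ x ∈ Ioi a, f x ≤ a ^ 2 * (γ / π) * x ^ (-2:ℝ) := by
        intro x hx
        have hxa : a < x := hx
        have hx0 : 0 < x := ha'.trans hxa
        have hrw : x ^ (-2:ℝ) = (x ^ 2)⁻¹ := by
          rw [show (-2:ℝ) = -(2:ℕ) by norm_num, Real.rpow_neg hx0.le, Real.rpow_natCast]
        rw [hrw, mul_assoc, show γ / π * (x ^ 2)⁻¹ = γ / (π * x ^ 2) by
          field_simp]
        have h1 : f x ≤ a ^ 2 * cauchyPDF γ x :=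
          mul_le_mul_of_nonneg_right (min_le_right _ _) (cauchyPDF_pos hγ x).le
        refine h1.trans ?_
        unfold cauchyPDF
        have hd : γ / (π * (γ ^ 2 + x ^ 2)) ≤ γ / (π * x ^ 2) := by
          gcongr
          nlinarith [sq_nonneg γ]
        exact mul_le_mul_of_nonneg_left hd (sq_nonneg a)
      calc (∫ h in Ioi a, f h) ≤ ∫ x in Ioi a, a ^ 2 * (γ / π) * x ^ (-2:ℝ) :=
            setIntegral_mono_on hfint.integrableOn hrint measurableSet_Ioi hle
        _ = a ^ 2 * (γ / π) * ∫ x in Ioi a, x ^ (-2:ℝ) := by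
            rw [integral_const_mul]
        _ = γ * a / π := by
            rw [integral_Ioi_rpow_of_lt (by norm_num) ha']
            rw [show (-2:ℝ) + 1 = -1 by norm_num, Real.rpow_neg_one]
            field_simp
    calc (∫ h in Ioi (0:ℝ), f h) = _ + _ := hunion
      _ ≤ γ * a / π + γ * a / π := add_le_add hI1 hI2
      _ = 2 * γ * a / π := by ring

/-- If `|g| ≤ B < τ` and `H ~ Cauchy(0, γ₀)` with `0 < γ₀ ≤ γ`, then
`E[(C_τ(g + H) − g)²] ≤ 4γτ/π`. -/
theorem hardClip_cauchy_variance (τ B g γ γ₀ : ℝ) (hτ : 0 < τ) (hg : |g| ≤ B) (hB : B < τ)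
    (hγ₀ : 0 < γ₀) (hγ : γ₀ ≤ γ) :
    (∫ h, (hardClip τ (g + h) - g) ^ 2 * cauchyPDF γ₀ h) ≤ 4 * γ * τ / π := by
  have hg1 : -τ < g := by cases abs_le.mp hg; linarith
  have hg2 : g < τ := by cases abs_le.mp hg; linarith
  set f : ℝ → ℝ := fun h => (hardClip τ (g + h) - g) ^ 2 * cauchyPDF γ₀ h with hfdef
  have hfeq : ∀ h, f h = (max (-τ) (min τ (g + h)) - g) ^ 2 * cauchyPDF γ₀ h := by
    intro h; rw [hfdef]; simp only [hardClip_eq hτ.le]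
  have hfcont : Continuous f := by
    have : f = fun h => (max (-τ) (min τ (g + h)) - g) ^ 2 * cauchyPDF γ₀ h := funext hfeq
    rw [this]
    exact (((continuous_const.max ((continuous_const.min
      (continuous_const.add continuous_id)))).sub continuous_const).pow 2).mul
      (cauchyPDF_continuous hγ₀)
  -- global integrability
  have hfint : Integrable f := by
    refine ((cauchyPDF_integrable hγ₀).const_mul ((2*τ) ^ 2)).mono'
      hfcont.aestronglyMeasurable (ae_of_all _ fun x => ?_)
    have hp := cauchyPDF_pos hγ₀ x
    rw [Real.norm_eq_abs, abs_of_nonneg (by positivity), hfeq]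
    refine mul_le_mul_of_nonneg_right ?_ hp.le
    have h1 : -τ ≤ max (-τ) (min τ (g + x)) := le_max_left _ _
    have h2 : max (-τ) (min τ (g + x)) ≤ τ := by
      refine max_le (by linarith) (min_le_left _ _)
    nlinarith
  -- pointwise bounds
  have hpos : ∀ h : ℝ, 0 ≤ h → f h ≤ min (h ^ 2) ((τ - g) ^ 2) * cauchyPDF γ₀ h := by
    intro h hh
    rw [hfeq]
    refine mul_le_mul_of_nonneg_right ?_ (cauchyPDF_pos hγ₀ h).le
    have hmax : max (-τ) (min τ (g + h)) = min τ (g + h) :=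
      max_eq_right (le_min (by linarith) (by linarith))
    rw [hmax]
    rcases le_total τ (g + h) with hc | hc
    · rw [min_eq_left hc]
      refine le_min (by nlinarith) (by nlinarith)
    · rw [min_eq_right hc]
      refine le_min (by nlinarith) (by nlinarith)
  have hneg : ∀ h : ℝ, h ≤ 0 → f h ≤ min (h ^ 2) ((τ + g) ^ 2) * cauchyPDF γ₀ h := by
    intro h hh
    rw [hfeq]
    refine mul_le_mul_of_nonneg_right ?_ (cauchyPDF_pos hγ₀ h).le
    have hmin : min τ (g + h) = g + h := min_eq_right (by linarith)
    rw [hmin]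
    rcases le_total (-τ) (g + h) with hc | hc
    · rw [max_eq_right hc]
      refine le_min (by nlinarith) (by nlinarith)
    · rw [max_eq_left hc]
      refine le_min (by nlinarith) (by nlinarith)
  -- split integral
  have hsplit : (∫ h, f h) = (∫ h in Iic (0:ℝ), f h) + ∫ h in Ioi (0:ℝ), f h := by
    rw [← integral_add_compl measurableSet_Iic hfint, compl_Iic]
  -- positive side
  have hIoi : (∫ h in Ioi (0:ℝ), f h) ≤ 2 * γ₀ * (τ - g) / π := by
    refine le_trans ?_ (tail_bound hγ₀ (by linarith : (0:ℝ) ≤ τ - g))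
    exact setIntegral_mono_on hfint.integrableOn
      ((min_sq_integrable (τ - g) hγ₀).integrableOn) measurableSet_Ioi
      (fun x hx => hpos x (le_of_lt hx))
  -- negative side via reflection
  have hIic : (∫ h in Iic (0:ℝ), f h) ≤ 2 * γ₀ * (τ + g) / π := by
    have hrefl : (∫ h in Iic (0:ℝ), f h) = ∫ h in Ioi (0:ℝ), f (-h) := by
      rw [integral_comp_neg_Ioi, neg_zero]
    rw [hrefl]
    refine le_trans ?_ (tail_bound hγ₀ (by linarith : (0:ℝ) ≤ τ + g))
    have hint1 : IntegrableOn (fun h : ℝ => f (-h)) (Ioi 0) := by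
      have : Integrable (fun h : ℝ => f (-h)) := hfint.comp_neg
      exact this.integrableOn
    refine setIntegral_mono_on hint1
      ((min_sq_integrable (τ + g) hγ₀).integrableOn) measurableSet_Ioi
      (fun x hx => ?_)
    have hx0 : (0:ℝ) < x := hx
    have := hneg (-x) (by linarith)
    refine this.trans (le_of_eq ?_)
    unfold cauchyPDF
    rw [neg_pow]
    norm_num
  calc (∫ h, f h) = _ + _ := hsplit
    _ ≤ 2 * γ₀ * (τ + g) / π + 2 * γ₀ * (τ - g) / π := add_le_add hIic hIoi
    _ = 4 * γ₀ * τ / π := by ring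
    _ ≤ 4 * γ * τ / π := by gcongr
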